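/- Let F = (A, C) be a finite AAF and l a labelling of F. There exists a CC-wise total order ≼ on F such that l is a complete labelling of F^3_≼ (Reduction 3) if and only if the following three conditions hold: (1) ((I×I) ∪ (I×U) ∪ (U×I)) ∩ C = ∅; (2) every out-labelled argument attacks or is attacked by an in-labelled argument; (3) every undec-labelled argument attacks or is attacked by an undec-labelled argument. -/
import Mathlib


/-- The three labels of a labelling: `inn` (in), `out`, `undec`. -/
inductive Label where
  | inn : Label
  | out : Label
  | undec : Label
deriving DecidableEq

/-- Undirected connectivity: reachability in the symmetric closure of `C`.
`Conn C a b` holds iff `a` and `b` are joined by an undirected path, i.e.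
they lie in the same connected component of `(A, C)`. -/
def Conn {A : Type*} (C : A → A → Prop) : A → A → Prop :=
  Relation.ReflTransGen (fun x y => C x y ∨ C y x)

/-- A CC-wise total order on the AAF `(A, C)`: a reflexive transitive relation
whose restriction to each connected component is total. -/
structure CCOrder {A : Type*} (C : A → A → Prop) where
  le : A → A → Prop
  refl : ∀ a, le a a
  trans : ∀ a b c, le a b → le b c → le a c
  total : ∀ a b, Conn C a b → le a b ∨ le b a

/-- Strict part: `a ≺ b` iff `a ≼ b` and not `b ≼ a`. -/
def CCOrder.lt {A : Type*} {C : A → A → Prop} (r : CCOrder C) (a b : A) : Prop :=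
  r.le a b ∧ ¬ r.le b a

/-- Reduction 1: `C₁ = {(a,b) | ((a,b) ∈ C ∧ b ≼ a) ∨ ((b,a) ∈ C ∧ b ≺ a)}`. -/
def red1 {A : Type*} (C : A → A → Prop) (r : CCOrder C) (a b : A) : Prop :=
  (C a b ∧ r.le b a) ∨ (C b a ∧ r.lt b a)

/-- Reduction 2: `C₂ = {(a,b) ∈ C | b ≼ a ∨ (b,a) ∉ C}`. -/
def red2 {A : Type*} (C : A → A → Prop) (r : CCOrder C) (a b : A) : Prop :=
  C a b ∧ (r.le b a ∨ ¬ C b a)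

/-- Reduction 3: `C₁ ∪ C₂`. -/
def red3 {A : Type*} (C : A → A → Prop) (r : CCOrder C) (a b : A) : Prop :=
  red1 C r a b ∨ red2 C r a b

/-- Reduction 4: `C₄ = {(a,b) ∈ C | b ≼ a}`. -/
def red4 {A : Type*} (C : A → A → Prop) (r : CCOrder C) (a b : A) : Prop :=
  C a b ∧ r.le b a

/-- `l` is a complete labelling of the attack relation `C`:
`l a = in` iff all attackers of `a` are `out`, and
`l a = out` iff some attacker of `a` is `in` (and `undec` otherwise,
which is automatic for a three-valued labelling). -/
def CompleteLabelling {A : Type*} (C : A → A → Prop) (l : A → Label) : Prop :=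
  ∀ a, (l a = Label.inn ↔ ∀ b, C b a → l b = Label.out) ∧
       (l a = Label.out ↔ ∃ b, C b a ∧ l b = Label.inn)

/-- `(a,b) ∈ F₁`: an attack of `C` assigned value 1 by `f`. -/
def inF1 {A : Type*} (C : A → A → Prop) (f : A → A → Bool) (a b : A) : Prop :=
  C a b ∧ f a b = true

/-- `(a,b) ∈ F₀`: an attack of `C` assigned value 0 by `f`. -/
def inF0 {A : Type*} (C : A → A → Prop) (f : A → A → Bool) (a b : A) : Prop :=
  C a b ∧ f a b = false

/-- The relation `conv(F₀) ∪ F₁`. -/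
def Drel {A : Type*} (C : A → A → Prop) (f : A → A → Bool) (a b : A) : Prop :=
  inF0 C f b a ∨ inF1 C f a b

/-- The relation `F₁ \ conv(F₀)`. -/
def Erel {A : Type*} (C : A → A → Prop) (f : A → A → Bool) (a b : A) : Prop :=
  inF1 C f a b ∧ ¬ inF0 C f b a

/-- `f` is a preference function over `(A, C)`: every directed cycle of
`conv(F₀) ∪ F₁` is entirely contained in `F₁ \ conv(F₀)`.  Equivalently
(edge-wise): every edge of `conv(F₀) ∪ F₁` lying on a directed cycle
(i.e. admitting a return path) belongs to `F₁ \ conv(F₀)`. -/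
def IsPrefFun {A : Type*} (C : A → A → Prop) (f : A → A → Bool) : Prop :=
  ∀ a b, Drel C f a b → Relation.ReflTransGen (Drel C f) b a → Erel C f a b

/-- A ranking function for `(F, l)` (assuming no argument is labelled `out`):
(1) every attack touching an `in`-labelled argument strictly decreases rank, and
(2) every `undec` argument has an `undec` attacker of rank at most its own. -/
def IsRanking {A : Type*} (C : A → A → Prop) (l : A → Label) (ψ : A → ℤ) : Prop :=
  (∀ u v, C u v → (l u = Label.inn ∨ l v = Label.inn) → ψ u > ψ v) ∧
  (∀ u, l u = Label.undec → ∃ v, C v u ∧ l v = Label.undec ∧ ψ v ≤ ψ u)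

lemma red3_edge {A : Type*} {C : A → A → Prop} {r : CCOrder C} {a b : A}
    (h : red3 C r a b) : C a b ∨ C b a := by
  rcases h with (⟨h, _⟩ | ⟨h, _⟩) | ⟨h, _⟩
  · exact Or.inl h
  · exact Or.inr h
  · exact Or.inl h

/-- existence of a CC-wise total order making `l` complete under
Reduction 3 is equivalent to the three structural conditions. -/
theorem stmt7 {A : Type*} [Fintype A] (C : A → A → Prop) (l : A → Label) :
    (∃ r : CCOrder C, CompleteLabelling (red3 C r) l) ↔
      ((∀ a b, C a b →
          ¬((l a = Label.inn ∧ l b = Label.inn) ∨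
            (l a = Label.inn ∧ l b = Label.undec) ∨
            (l a = Label.undec ∧ l b = Label.inn))) ∧
       (∀ a, l a = Label.out → ∃ b, l b = Label.inn ∧ (C a b ∨ C b a)) ∧
       (∀ u, l u = Label.undec → ∃ v, l v = Label.undec ∧ (C u v ∨ C v u))) := by
  classical
  constructor
  · rintro ⟨r, hc⟩
    have htot : ∀ a b, C a b → red3 C r a b ∨ red3 C r b a := by
      intro a b hab
      by_cases hba : C b a
      · rcases r.total a b (Relation.ReflTransGen.single (Or.inl hab)) with h | h
        · exact Or.inr (Or.inr ⟨hba, Or.inl h⟩)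
        · exact Or.inl (Or.inr ⟨hab, Or.inl h⟩)
      · exact Or.inl (Or.inr ⟨hab, Or.inr hba⟩)
    refine ⟨?_, ?_, ?_⟩
    · intro a b hab hbad
      rcases htot a b hab with h | h
      · rcases hbad with ⟨ha, hb⟩ | ⟨ha, hb⟩ | ⟨ha, hb⟩
        · have := (hc b).2.mpr ⟨a, h, ha⟩; simp [hb] at this
        · have := (hc b).2.mpr ⟨a, h, ha⟩; simp [hb] at this
        · have := (hc b).1.mp hb a h; simp [ha] at this
      · rcases hbad with ⟨ha, hb⟩ | ⟨ha, hb⟩ | ⟨ha, hb⟩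
        · have := (hc a).2.mpr ⟨b, h, hb⟩; simp [ha] at this
        · have := (hc a).1.mp ha b h; simp [hb] at this
        · have := (hc a).2.mpr ⟨b, h, hb⟩; simp [ha] at this
    · intro a ha
      obtain ⟨b, hb, hbl⟩ := (hc a).2.mp ha
      exact ⟨b, hbl, (red3_edge hb).symm⟩
    · intro u hu
      have h1' : ¬ (∀ b, red3 C r b u → l b = Label.out) := by
        intro h
        have := (hc u).1.mpr h
        simp [hu] at this
      push_neg at h1'
      obtain ⟨v, hvu, hv⟩ := h1'
      have hv2 : l v ≠ Label.inn := by
        intro h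
        have := (hc u).2.mpr ⟨v, hvu, h⟩
        simp [hu] at this
      have hvund : l v = Label.undec := by cases h : l v <;> simp_all
      exact ⟨v, hvund, (red3_edge hvu).symm⟩
  · rintro ⟨h1, h2, h3⟩
    set good : A → Prop := fun a => ∃ w, C w a ∧ l w = Label.undec with hgood
    set φ : A → ℕ := fun a =>
      if l a = Label.inn then 3 else if l a = Label.out then 0
      else if good a then 2 else 1 with hφ
    have φinn : ∀ a, l a = Label.inn → φ a = 3 := by intro a h; simp [hφ, h]
    have φout : ∀ a, l a = Label.out → φ a = 0 := by intro a h; simp [hφ, h]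
    have φug : ∀ a, l a = Label.undec → good a → φ a = 2 := by
      intro a h hg; simp [hφ, h, hg]
    have φun : ∀ a, l a = Label.undec → ¬ good a → φ a = 1 := by
      intro a h hg; simp [hφ, h, hg]
    refine ⟨⟨fun a b => φ a ≤ φ b, fun a => le_refl _,
      fun a b c hab hbc => le_trans hab hbc, fun a b _ => le_total _ _⟩, ?_⟩
    set r : CCOrder C := ⟨fun a b => φ a ≤ φ b, fun a => le_refl _,
      fun a b c hab hbc => le_trans hab hbc, fun a b _ => le_total _ _⟩ with hr
    -- neighbours of an `in` argument are `out`
    have hout : ∀ a b, (C a b ∨ C b a) → l a = Label.inn → l b = Label.out := by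
      intro a b hab ha
      rcases hab with h | h
      · have := h1 a b h
        cases hb : l b <;> simp_all
      · have := h1 b a h
        cases hb : l b <;> simp_all
    intro a
    cases ha : l a with
    | inn =>
      constructor
      · constructor
        · intro _ b hb
          exact hout a b (Or.symm (red3_edge hb)) ha
        · intro _; rfl
      · constructor
        · intro h; simp at h
        · rintro ⟨b, hb, hbl⟩
          have := hout a b (Or.symm (red3_edge hb)) ha
          rw [hbl] at this; simp at this
    | out =>
      obtain ⟨b, hbl, hb⟩ := h2 a ha
      have hle : r.le a b := by
        show φ a ≤ φ b
        rw [φout a ha, φinn b hbl]; omega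
      have hred : red3 C r b a := by
        by_cases hba : C b a
        · exact Or.inr ⟨hba, Or.inl hle⟩
        · have hab : C a b := by rcases hb with h | h; exact h; exact absurd h hba
          refine Or.inl (Or.inr ⟨hab, hle, ?_⟩)
          show ¬ φ b ≤ φ a
          rw [φout a ha, φinn b hbl]; omega
      constructor
      · constructor
        · intro h; simp at h
        · intro hall
          have := hall b hred
          rw [hbl] at this; simp at this
      · exact ⟨fun _ => ⟨b, hred, hbl⟩, fun _ => rfl⟩
    | undec =>
      -- an undec red3-attacker exists
      have key : ∃ v, l v = Label.undec ∧ red3 C r v a := by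
        by_cases hg : good a
        · obtain ⟨w, hwu, hwl⟩ := hg
          have hgu : good a := ⟨w, hwu, hwl⟩
          refine ⟨w, hwl, Or.inr ⟨hwu, ?_⟩⟩
          by_cases huw : C a w
          · left
            show φ a ≤ φ w
            have hgw : good w := ⟨a, huw, ha⟩
            rw [φug a ha hgu, φug w hwl hgw]
          · exact Or.inr huw
        · obtain ⟨v, hvl, hv⟩ := h3 a ha
          have huv : C a v := by
            rcases hv with h | h
            · exact h
            · exact absurd ⟨v, h, hvl⟩ hg
          have hgv : good v := ⟨a, huv, ha⟩
          refine ⟨v, hvl, Or.inl (Or.inr ⟨huv, ?_, ?_⟩)⟩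
          · show φ a ≤ φ v
            rw [φun a ha hg, φug v hvl hgv]; omega
          · show ¬ φ v ≤ φ a
            rw [φun a ha hg, φug v hvl hgv]; omega
      obtain ⟨v, hvl, hvred⟩ := key
      -- no `in` red3-attacker of a
      have hnoinn : ∀ x, red3 C r x a → l x ≠ Label.inn := by
        intro x hx hxl
        have := hout x a (red3_edge hx) hxl
        rw [ha] at this; simp at this
      constructor
      · constructor
        · intro h; simp at h
        · intro hall
          have := hall v hvred
          rw [hvl] at this; simp at this
      · constructor
        · intro h; simp at h
        · rintro ⟨x, hx, hxl⟩
          exact absurd hxl (hnoinn x hx)
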